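/- arXiv:1307.6149 — 2 statements merged into one kernel-verified Lean document; each statement's English description precedes it below -/
import Mathlib

section
/- For F ∈ 𝓕 and n ≥ 2, the condition lim_{K→∞} liminf_{x→∞} P(X_{2,n} ≤ K | Sₙ > x) = 1 is equivalent to lim_{K→∞} liminf_{x→∞} P(X_{1,n} > x − K | Sₙ > x) = 1, where X_{1,n} is the maximum and X_{2,n} the second largest of i.i.d. X₁,...,Xₙ with distribution F. -/
open MeasureTheory Filter Set

/-- `P` under the law of `n` i.i.d. copies with common law `μ`. -/
noncomputable def piP (μ : Measure ℝ) (n : ℕ) (A : Set (Fin n → ℝ)) : ℝ :=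
  ((Measure.pi fun _ : Fin n => μ) A).toReal

/-- The event `Sₙ > x`. -/
def SumGt {n : ℕ} (x : ℝ) (v : Fin n → ℝ) : Prop := x < ∑ i, v i

/-- The event that the second largest of `v 0, …, v (n-1)` is `≤ K`. -/
def SecondLe {n : ℕ} (K : ℝ) (v : Fin n → ℝ) : Prop :=
  ∀ i j : Fin n, i ≠ j → v i ≤ K ∨ v j ≤ K

/-- Conditional probability `P(A | Sₙ > x)`. -/
noncomputable def condN (μ : Measure ℝ) (n : ℕ) (A : Set (Fin n → ℝ)) (x : ℝ) : ℝ :=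
  piP μ n (A ∩ {v | SumGt x v}) / piP μ n {v | SumGt x v}

/-! If the second largest summand is at most `K` and `Sₙ > x`, the other `n - 1` summands add up
to at most `(n - 1) K`, so the largest one exceeds `x - (n - 1) K`.

Conversely, write `F̄ y = μ (Ioi y)`. The event `{X₁,ₙ > x - K', Sₙ > x}` is covered by
`{X₂,ₙ ≤ K, Sₙ > x}` and the event that two distinct coordinates exceed `K` and `x - K'`, which
by independence has probability at most `n² F̄ K F̄ (x - K')`. Since
`P(Sₙ > x) ≥ F̄ (x - K') (F̄ K')ⁿ⁻¹` for `K' ≥ 0`, the two conditional probabilities differ by at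
most `n² F̄ K / (F̄ K')ⁿ⁻¹`, which tends to `0` as `K → ∞` with `K'` fixed. -/

open scoped Topology

section Deterministic

variable {n : ℕ} {K x : ℝ} {v : Fin n → ℝ}

lemma SecondLe.le_of_ne_of_forall_le {m i : Fin n} (h : SecondLe K v) (hm : ∀ j, v j ≤ v m)
    (hi : i ≠ m) : v i ≤ K :=
  (h i m hi).elim id (hm i).trans

lemma SecondLe.exists_sub_mul_lt (hn : 0 < n) (h : SecondLe K v) (hx : SumGt x v) :
    ∃ i, x - (n - 1) * K < v i := by
  have : Nonempty (Fin n) := ⟨⟨0, hn⟩⟩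
  obtain ⟨m, -, hm⟩ := Finset.univ.exists_max_image v Finset.univ_nonempty
  have hrest : ∑ i ∈ Finset.univ.erase m, v i ≤ (n - 1) * K := by
    calc ∑ i ∈ Finset.univ.erase m, v i ≤ (Finset.univ.erase m).card • K :=
          Finset.sum_le_card_nsmul _ _ _ fun i hi ↦
            h.le_of_ne_of_forall_le (fun j ↦ hm j (Finset.mem_univ j))
              (Finset.ne_of_mem_erase hi)
      _ = (n - 1) * K := by
          rw [Finset.card_erase_of_mem (Finset.mem_univ m), Finset.card_univ, Fintype.card_fin,
            nsmul_eq_mul, Nat.cast_pred hn]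
  have hsplit := Finset.add_sum_erase Finset.univ v (Finset.mem_univ m)
  exact ⟨m, by unfold SumGt at hx; linarith⟩

lemma not_secondLe_inter_exists_lt_subset (K y : ℝ) :
    {v : Fin n → ℝ | ¬ SecondLe K v} ∩ {v | ∃ i, y < v i} ⊆
      ⋃ p ∈ (Finset.univ : Finset (Fin n)).offDiag, {v | K < v p.1 ∧ y < v p.2} := by
  rintro v ⟨hbad, m, hm⟩
  simp only [mem_ofPred_eq, SecondLe, not_forall, not_or, not_le] at hbad
  obtain ⟨a, b, hab, ha, hb⟩ := hbad
  simp only [mem_iUnion, Finset.mem_offDiag, Finset.mem_univ, true_and, mem_ofPred_eq,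
    exists_prop, Prod.exists]
  by_cases hma : m = a
  · exact ⟨b, m, hma ▸ hab.symm, hb, hm⟩
  · exact ⟨a, m, Ne.symm hma, ha, hm⟩

end Deterministic

section Probability

variable {μ : Measure ℝ} {n : ℕ}

lemma measureReal_pi_setOf_lt_and_lt [IsProbabilityMeasure μ] {i j : Fin n} (hij : i ≠ j)
    (a b : ℝ) :
    (Measure.pi fun _ : Fin n ↦ μ).real {v | a < v i ∧ b < v j} =
      μ.real (Ioi a) * μ.real (Ioi b) := by
  have hind := (ProbabilityTheory.iIndepFun_pi (μ := fun _ : Fin n ↦ μ)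
    (X := fun _ ↦ id) fun _ ↦ aemeasurable_id).indepFun hij
  have hmul := hind.measure_inter_preimage_eq_mul _ _ (measurableSet_Ioi (a := a))
    (measurableSet_Ioi (a := b))
  have heval (k : Fin n) (c : ℝ) :
      (Measure.pi fun _ : Fin n ↦ μ) ((fun v ↦ id (v k)) ⁻¹' Ioi c) = μ (Ioi c) :=
    (measurePreserving_eval _ k).measure_preimage measurableSet_Ioi.nullMeasurableSet
  rw [heval, heval] at hmul
  rw [measureReal_def, measureReal_def, measureReal_def, ← ENNReal.toReal_mul, ← hmul]
  rfl

lemma tendsto_measureReal_Ioi_atTop [IsFiniteMeasure μ] :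
    Tendsto (fun K ↦ μ.real (Ioi K)) atTop (𝓝 0) := by
  have h := tendsto_measure_iInter_atTop (μ := μ) (fun K ↦ measurableSet_Ioi.nullMeasurableSet)
    (fun _ _ ↦ Ioi_subset_Ioi) ⟨0, measure_ne_top μ (Ioi 0)⟩
  rw [show ⋂ K : ℝ, Ioi K = ∅ from iInter_eq_empty_iff.2 fun y ↦ ⟨y, lt_irrefl y⟩,
    measure_empty] at h
  simpa [Function.comp_def, measureReal_def] using
    (ENNReal.tendsto_toReal ENNReal.zero_ne_top).comp h

lemma piP_not_secondLe_inter_le [IsProbabilityMeasure μ] (K y : ℝ) :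
    piP μ n ({v | ¬ SecondLe K v} ∩ {v | ∃ i, y < v i}) ≤
      n ^ 2 * (μ.real (Ioi K) * μ.real (Ioi y)) := by
  calc piP μ n ({v | ¬ SecondLe K v} ∩ {v | ∃ i, y < v i})
      ≤ (Measure.pi fun _ : Fin n ↦ μ).real
          (⋃ p ∈ (Finset.univ : Finset (Fin n)).offDiag, {v | K < v p.1 ∧ y < v p.2}) :=
        measureReal_mono (not_secondLe_inter_exists_lt_subset K y) (measure_ne_top _ _)
    _ ≤ ∑ p ∈ (Finset.univ : Finset (Fin n)).offDiag,
          (Measure.pi fun _ : Fin n ↦ μ).real {v | K < v p.1 ∧ y < v p.2} :=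
        measureReal_biUnion_finset_le _ _
    _ = (Finset.univ : Finset (Fin n)).offDiag.card * (μ.real (Ioi K) * μ.real (Ioi y)) := by
        rw [Finset.sum_congr rfl fun p hp ↦
          measureReal_pi_setOf_lt_and_lt (Finset.mem_offDiag.1 hp).2.2 K y, Finset.sum_const,
          nsmul_eq_mul]
    _ ≤ n ^ 2 * (μ.real (Ioi K) * μ.real (Ioi y)) := by
        gcongr
        rw [Finset.offDiag_card, Finset.card_univ, Fintype.card_fin, sq]
        exact_mod_cast Nat.sub_le _ _

lemma measureReal_Ioi_mul_pow_le_piP_sumGt [IsProbabilityMeasure μ] (hn : 2 ≤ n) {K : ℝ}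
    (hK : 0 ≤ K) (x : ℝ) :
    μ.real (Ioi (x - K)) * μ.real (Ioi K) ^ (n - 1) ≤ piP μ n {v | SumGt x v} := by
  obtain ⟨m, rfl⟩ : ∃ m, n = m + 1 := ⟨n - 1, by omega⟩
  set s : Fin (m + 1) → Set ℝ := Fin.cons (Ioi (x - K)) fun _ ↦ Ioi K
  have hsub : Set.pi univ s ⊆ {v | SumGt x v} := by
    intro v hv
    have h0 : x - K < v 0 := hv 0 (mem_univ _)
    have hrest : m • K ≤ ∑ i : Fin m, v i.succ := by
      simpa using Finset.card_nsmul_le_sum Finset.univ (fun i : Fin m ↦ v i.succ) K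
        fun i _ ↦ (hv i.succ (mem_univ _)).le
    have hm : K ≤ m • K := by
      rw [nsmul_eq_mul]
      exact le_mul_of_one_le_left hK (by exact_mod_cast (by omega : 1 ≤ m))
    show x < ∑ i, v i
    rw [Fin.sum_univ_succ]
    linarith
  calc μ.real (Ioi (x - K)) * μ.real (Ioi K) ^ (m + 1 - 1)
      = (Measure.pi fun _ : Fin (m + 1) ↦ μ).real (Set.pi univ s) := by
        simp only [measureReal_def, Measure.pi_pi, Fin.prod_univ_succ]
        simp [s]
    _ ≤ piP μ (m + 1) {v | SumGt x v} := measureReal_mono hsub (measure_ne_top _ _)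

end Probability

section ConditionalProbability

variable {μ : Measure ℝ} {n : ℕ} {A B E : Set (Fin n → ℝ)} {x : ℝ}

lemma condN_nonneg : 0 ≤ condN μ n A x :=
  div_nonneg measureReal_nonneg measureReal_nonneg

variable [IsFiniteMeasure μ]

lemma condN_le_one : condN μ n A x ≤ 1 :=
  div_le_one_of_le₀ (measureReal_mono inter_subset_right (measure_ne_top _ _))
    measureReal_nonneg

lemma condN_mono (h : A ∩ {v | SumGt x v} ⊆ B) : condN μ n A x ≤ condN μ n B x :=
  div_le_div_of_nonneg_right
    (measureReal_mono (subset_inter h inter_subset_right) (measure_ne_top _ _))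
    measureReal_nonneg

lemma condN_le_add_of_subset (h : A ∩ {v | SumGt x v} ⊆ (B ∩ {v | SumGt x v}) ∪ E) :
    condN μ n A x ≤ condN μ n B x + piP μ n E / piP μ n {v | SumGt x v} := by
  rw [condN, condN, ← add_div]
  exact div_le_div_of_nonneg_right
    ((measureReal_mono h (measure_ne_top _ _)).trans (measureReal_union_le _ _))
    measureReal_nonneg

end ConditionalProbability

section Liminf

variable {μ : Measure ℝ} [IsFiniteMeasure μ] {n : ℕ} {l : Filter ℝ} [l.NeBot]
  {A B : ℝ → Set (Fin n → ℝ)}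

lemma liminf_condN_le_one : liminf (fun x ↦ condN μ n (A x) x) l ≤ 1 :=
  liminf_le_of_frequently_le (.of_forall fun _ ↦ condN_le_one)
    (isBoundedUnder_of ⟨0, fun _ ↦ condN_nonneg⟩)

lemma liminf_condN_le_liminf_add {c : ℝ}
    (h : ∀ x, condN μ n (A x) x ≤ condN μ n (B x) x + c) :
    liminf (fun x ↦ condN μ n (A x) x) l ≤ liminf (fun x ↦ condN μ n (B x) x) l + c := by
  have hbdd (C : ℝ → Set (Fin n → ℝ)) : IsBoundedUnder (· ≥ ·) l fun x ↦ condN μ n (C x) x :=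
    isBoundedUnder_of ⟨0, fun _ ↦ condN_nonneg⟩
  have hcobdd (C : ℝ → Set (Fin n → ℝ)) (d : ℝ) :
      IsCoboundedUnder (· ≥ ·) l fun x ↦ condN μ n (C x) x + d :=
    (isBoundedUnder_of ⟨1 + d, fun _ ↦ add_le_add_left condN_le_one d⟩).isCoboundedUnder_ge
  rw [← liminf_add_const l _ c (by simpa using hcobdd B 0) (hbdd B)]
  exact liminf_le_liminf (.of_forall h) (hbdd A) (hcobdd B c)

lemma liminf_condN_mono (h : ∀ x, condN μ n (A x) x ≤ condN μ n (B x) x) :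
    liminf (fun x ↦ condN μ n (A x) x) l ≤ liminf (fun x ↦ condN μ n (B x) x) l := by
  simpa using liminf_condN_le_liminf_add (c := 0) (by simpa using h)

lemma tendsto_liminf_condN_nhds_one {A : ℝ → ℝ → Set (Fin n → ℝ)}
    (h : ∀ a < 1, ∀ᶠ K in atTop, a < liminf (fun x ↦ condN μ n (A K x) x) l) :
    Tendsto (fun K ↦ liminf (fun x ↦ condN μ n (A K x) x) l) atTop (𝓝 1) :=
  tendsto_order.2 ⟨h, fun _ ha ↦ .of_forall fun _ ↦ liminf_condN_le_one.trans_lt ha⟩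

end Liminf

lemma condN_exists_gt_le_condN_secondLe_add {μ : Measure ℝ} [IsProbabilityMeasure μ]
    (hub : ∀ x : ℝ, 0 < μ (Ioi x)) {n : ℕ} (hn : 2 ≤ n) (K : ℝ) {K' : ℝ} (hK' : 0 ≤ K')
    (x : ℝ) :
    condN μ n {v | ∃ i, x - K' < v i} x ≤
      condN μ n {v | SecondLe K v} x + n ^ 2 * μ.real (Ioi K) / μ.real (Ioi K') ^ (n - 1) := by
  have hpos (y : ℝ) : 0 < μ.real (Ioi y) := ENNReal.toReal_pos (hub y).ne' (measure_ne_top _ _)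
  have hsub : {v : Fin n → ℝ | ∃ i, x - K' < v i} ∩ {v | SumGt x v} ⊆
      ({v | SecondLe K v} ∩ {v | SumGt x v}) ∪
        ({v | ¬ SecondLe K v} ∩ {v | ∃ i, x - K' < v i}) := by
    rintro v ⟨hM, hS⟩
    by_cases h : SecondLe K v
    exacts [Or.inl ⟨h, hS⟩, Or.inr ⟨h, hM⟩]
  refine (condN_le_add_of_subset hsub).trans (add_le_add le_rfl ?_)
  calc piP μ n ({v | ¬ SecondLe K v} ∩ {v | ∃ i, x - K' < v i}) / piP μ n {v | SumGt x v}
      ≤ n ^ 2 * (μ.real (Ioi K) * μ.real (Ioi (x - K'))) /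
          (μ.real (Ioi (x - K')) * μ.real (Ioi K') ^ (n - 1)) :=
        div_le_div₀ (by positivity) (piP_not_secondLe_inter_le K _)
          (mul_pos (hpos _) (pow_pos (hpos _) _))
          (measureReal_Ioi_mul_pow_le_piP_sumGt hn hK' x)
    _ = n ^ 2 * μ.real (Ioi K) / μ.real (Ioi K') ^ (n - 1) := by
        field_simp [(hpos (x - K')).ne']

theorem stmt2_general (μ : Measure ℝ) [IsProbabilityMeasure μ]
    (hub : ∀ x : ℝ, 0 < μ (Set.Ioi x))
    (n : ℕ) (hn : 2 ≤ n) :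
    Tendsto (fun K : ℝ =>
        liminf (fun x : ℝ => condN μ n {v | SecondLe K v} x) atTop) atTop (nhds 1)
    ↔ Tendsto (fun K : ℝ =>
        liminf (fun x : ℝ => condN μ n {v | ∃ i, x - K < v i} x) atTop) atTop (nhds 1) := by
  constructor
  · intro H
    refine tendsto_liminf_condN_nhds_one fun a ha ↦ ?_
    obtain ⟨K₀, hK₀⟩ := (H.eventually_const_lt ha).exists
    filter_upwards [eventually_ge_atTop ((n - 1) * K₀)] with K hK
    refine hK₀.trans_le (liminf_condN_mono fun x ↦ condN_mono fun v hv ↦ ?_)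
    obtain ⟨i, hi⟩ := hv.1.exists_sub_mul_lt (by omega) hv.2
    exact ⟨i, by linarith⟩
  · intro H
    refine tendsto_liminf_condN_nhds_one fun a ha ↦ ?_
    obtain ⟨b, hab, hb⟩ := exists_between ha
    obtain ⟨K', hK'b, hK'⟩ := ((H.eventually_const_lt hb).and (eventually_ge_atTop 0)).exists
    have herr : Tendsto (fun K ↦ n ^ 2 * μ.real (Ioi K) / μ.real (Ioi K') ^ (n - 1)) atTop
        (𝓝 0) := by
      simpa using (tendsto_measureReal_Ioi_atTop.const_mul _).div_const _
    filter_upwards [herr.eventually_lt_const (sub_pos.2 hab)] with K hK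
    have := liminf_condN_le_liminf_add (l := atTop)
      (condN_exists_gt_le_condN_secondLe_add hub hn K hK')
    linarith

theorem stmt2 (μ : Measure ℝ) [IsProbabilityMeasure μ]
    (hnn : μ (Set.Iio 0) = 0) (hub : ∀ x : ℝ, 0 < μ (Set.Ioi x))
    (n : ℕ) (hn : 2 ≤ n) :
    Tendsto (fun K : ℝ =>
        liminf (fun x : ℝ => condN μ n {v | SecondLe K v} x) atTop) atTop (nhds 1)
    ↔ Tendsto (fun K : ℝ =>
        liminf (fun x : ℝ => condN μ n {v | ∃ i, x - K < v i} x) atTop) atTop (nhds 1) :=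
  stmt2_general μ hub n hn
end

section
/- 𝓙 ∩ 𝓛 = 𝓢: a distribution F of a nonnegative unbounded random variable is subexponential if and only if it is both long-tailed and belongs to the class 𝓙. -/
open MeasureTheory Filter Set

/-- Tail of a distribution: `F̄(x) = μ(x, ∞)`. -/
noncomputable def tail (μ : Measure ℝ) (x : ℝ) : ℝ := (μ (Set.Ioi x)).toReal

/-- Conditional probability `P(A | X₁ + X₂ > x)` for two i.i.d. variables with law `μ`. -/
noncomputable def condPair (μ : Measure ℝ) (A : Set (ℝ × ℝ)) (x : ℝ) : ℝ :=
  ((μ.prod μ) (A ∩ {p | x < p.1 + p.2})).toReal / ((μ.prod μ) {p | x < p.1 + p.2}).toReal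

/-- The class 𝓙 : `lim_{K→∞} liminf_{x→∞} P(max(X₁,X₂) > x − K | X₁ + X₂ > x) = 1`. -/
def MemJ (μ : Measure ℝ) : Prop :=
  Tendsto (fun K : ℝ =>
      liminf (fun x : ℝ => condPair μ {p | x - K < max p.1 p.2} x) atTop)
    atTop (nhds 1)

/-- The class 𝓙 (equivalent form): for every nonnegative, unbounded, nondecreasing `g`,
`lim_{x→∞} P(min(X₁,X₂) > g(x) | X₁ + X₂ > x) = 0`. -/
def MemJg (μ : Measure ℝ) : Prop :=
  ∀ g : ℝ → ℝ, (∀ x, 0 ≤ g x) → Monotone g → (∀ M, ∃ x, M < g x) →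
    Tendsto (fun x : ℝ => condPair μ {p | g x < min p.1 p.2} x) atTop (nhds 0)

/-- Tail of the two-fold convolution: `F̄²*(x) = P(X₁ + X₂ > x)`. -/
noncomputable def tail2 (μ : Measure ℝ) (x : ℝ) : ℝ := ((μ.prod μ) {p | x < p.1 + p.2}).toReal

/-- Weak asymptotic tail-equivalence `F̄ ≍ Ḡ`:
`0 < liminf F̄(x)/Ḡ(x) ≤ limsup F̄(x)/Ḡ(x) < ∞`. -/
def WeakTailEquiv (μ ν : Measure ℝ) : Prop :=
  (∃ c : ℝ, 0 < c ∧ ∀ᶠ x in atTop, c * tail ν x ≤ tail μ x) ∧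
  (∃ C : ℝ, ∀ᶠ x in atTop, tail μ x ≤ C * tail ν x)

/-- Convolution of two laws on ℝ. -/
noncomputable def conv (μ ν : Measure ℝ) : Measure ℝ :=
  Measure.map (fun p : ℝ × ℝ => p.1 + p.2) (μ.prod ν)

/-- `n`-fold convolution `F^{n*}`. -/
noncomputable def nconv (μ : Measure ℝ) : ℕ → Measure ℝ
  | 0 => Measure.dirac 0
  | n + 1 => conv (nconv μ n) μ

/-- Long-tailed: `lim_{x→∞} F̄(x+y)/F̄(x) = 1` for all `y`. -/
def LongTailed (μ : Measure ℝ) : Prop :=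
  ∀ y : ℝ, Tendsto (fun x : ℝ => tail μ (x + y) / tail μ x) atTop (nhds 1)

/-- Subexponential: `lim_{x→∞} F̄²*(x)/F̄(x) = 2`. -/
def Subexponential (μ : Measure ℝ) : Prop :=
  Tendsto (fun x : ℝ => tail2 μ x / tail μ x) atTop (nhds 2)

/-!
For nonnegative `X₁, X₂` the event `{max X₁ X₂ > x}` has probability `2 F̄(x) - F̄(x)²` and lies
in `{X₁ + X₂ > x}`. Hence `F̄²*(x) / F̄(x) ≥ 2 - F̄(x)`, and if `F` is subexponential then
`P(max X₁ X₂ > x - K | X₁ + X₂ > x) ≥ (2 - F̄(x)) F̄(x) / F̄²*(x) → 1` for every `K ≥ 0`.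
Conversely `P(max X₁ X₂ > x - K, X₁ + X₂ > x) ≤ 2 F̄(x - K)`: under `𝓙` the left side is at least
`(1 - δ) F̄²*(x)` for a suitable `K`, and under `𝓛` the right side is `≈ 2 F̄(x)`, so
`limsup F̄²*/F̄ ≤ 2`.
That subexponential laws are long-tailed is the classical estimate obtained by splitting
`{X₁ + X₂ > x}` according to `X₁ > x`, `X₁ ≤ y` or `y < X₁ ≤ x`:
`F̄²*(x) ≥ F̄(x) (2 - F̄(y)) + (F̄(y) - F̄(x)) F̄(x - y)`, whose right side divided by `F̄(x)`
forces `F̄(x - y) / F̄(x) → 1`.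
-/

open Topology

section General

variable {μ : Measure ℝ}

lemma measureReal_Ioi_eq_tail (x : ℝ) : μ.real (Ioi x) = tail μ x := rfl

lemma ae_nonneg_prod (hnn : μ (Iio 0) = 0) : ∀ᵐ p ∂μ.prod μ, 0 ≤ p.1 ∧ 0 ≤ p.2 := by
  have h : ∀ᵐ t ∂μ, 0 ≤ t := (measure_eq_zero_iff_ae_notMem.1 hnn).mono fun _ ht => not_lt.1 ht
  exact (Measure.quasiMeasurePreserving_fst.ae h).and (Measure.quasiMeasurePreserving_snd.ae h)

lemma condPair_nonneg (A : Set (ℝ × ℝ)) (x : ℝ) : 0 ≤ condPair μ A x :=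
  div_nonneg ENNReal.toReal_nonneg ENNReal.toReal_nonneg

lemma condPair_mul_tail2 {x : ℝ} (hx : tail2 μ x ≠ 0) (A : Set (ℝ × ℝ)) :
    condPair μ A x * tail2 μ x = (μ.prod μ).real (A ∩ {p | x < p.1 + p.2}) :=
  div_mul_cancel₀ _ hx

lemma longTailed_of_tendsto_tail_sub_div
    (h : ∀ y, 0 ≤ y → Tendsto (fun x => tail μ (x - y) / tail μ x) atTop (𝓝 1)) :
    LongTailed μ := by
  intro y
  rcases le_total y 0 with hy | hy
  · simpa using h (-y) (neg_nonneg.2 hy)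
  · have h' := ((h y hy).comp (tendsto_atTop_add_const_right atTop y tendsto_id)).inv₀ one_ne_zero
    simpa [Function.comp_def, inv_div] using h'

end General

section Finite

variable {μ : Measure ℝ} [IsFiniteMeasure μ]

lemma tail_antitone : Antitone (tail μ) := fun _ _ hab => measureReal_mono (Ioi_subset_Ioi hab)

lemma tail_pos (hub : ∀ x : ℝ, 0 < μ (Ioi x)) (x : ℝ) : 0 < tail μ x :=
  ENNReal.toReal_pos (hub x).ne' (measure_ne_top μ _)

lemma condPair_le_one (A : Set (ℝ × ℝ)) (x : ℝ) : condPair μ A x ≤ 1 :=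
  div_le_one_of_le₀ (measureReal_mono inter_subset_right) ENNReal.toReal_nonneg

end Finite

section Probability

variable {μ : Measure ℝ} [IsProbabilityMeasure μ]

lemma tail_le_one (x : ℝ) : tail μ x ≤ 1 := measureReal_le_one

lemma measureReal_Iic_eq_one_sub_tail (x : ℝ) : μ.real (Iic x) = 1 - tail μ x := by
  rw [← compl_Ioi, probReal_compl_eq_one_sub measurableSet_Ioi, measureReal_Ioi_eq_tail]

lemma tendsto_tail_atTop (μ : Measure ℝ) [IsProbabilityMeasure μ] :
    Tendsto (tail μ) atTop (𝓝 0) := by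
  have h : Tendsto (fun x => μ.real (Iic x)) atTop (𝓝 1) := by
    have h := (ENNReal.tendsto_toReal (measure_ne_top μ univ)).comp (tendsto_measure_Iic_atTop μ)
    rwa [measure_univ, ENNReal.toReal_one] at h
  simpa [measureReal_Iic_eq_one_sub_tail] using h.const_sub 1

lemma measureReal_lt_max (x : ℝ) :
    (μ.prod μ).real {p | x < max p.1 p.2} = 2 * tail μ x - tail μ x ^ 2 := by
  have h : {p : ℝ × ℝ | x < max p.1 p.2} = (Iic x ×ˢ Iic x)ᶜ := by
    ext p
    simp only [mem_ofPred_eq, mem_compl_iff, mem_prod, mem_Iic, lt_max_iff, not_and_or, not_le]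
  rw [h, probReal_compl_eq_one_sub (measurableSet_Iic.prod measurableSet_Iic),
    measureReal_prod_prod, measureReal_Iic_eq_one_sub_tail]
  ring

lemma measureReal_inter_le_two_mul_tail (x y : ℝ) :
    (μ.prod μ).real ({p | y < max p.1 p.2} ∩ {p | x < p.1 + p.2}) ≤ 2 * tail μ y :=
  (measureReal_mono inter_subset_left).trans
    ((measureReal_lt_max y).trans_le (sub_le_self _ (sq_nonneg _)))

variable (hnn : μ (Iio 0) = 0)
include hnn

lemma two_mul_tail_sub_sq_le_measureReal_inter {x y : ℝ} (hyx : y ≤ x) :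
    2 * tail μ x - tail μ x ^ 2 ≤
      (μ.prod μ).real ({p | y < max p.1 p.2} ∩ {p | x < p.1 + p.2}) := by
  rw [← measureReal_lt_max]
  refine ENNReal.toReal_mono (measure_ne_top _ _) (measure_mono_ae ?_)
  filter_upwards [ae_nonneg_prod hnn] with p ⟨h1, h2⟩ hp
  change x < max p.1 p.2 at hp
  change y < max p.1 p.2 ∧ x < p.1 + p.2
  rw [lt_max_iff] at hp ⊢
  exact ⟨hp.imp (fun _ => by linarith) (fun _ => by linarith), by rcases hp with _ | _ <;> linarith⟩

lemma two_mul_tail_sub_sq_le_tail2 (x : ℝ) : 2 * tail μ x - tail μ x ^ 2 ≤ tail2 μ x :=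
  (two_mul_tail_sub_sq_le_measureReal_inter hnn le_rfl).trans (measureReal_mono inter_subset_right)

lemma tail2_pos (hub : ∀ x : ℝ, 0 < μ (Ioi x)) (x : ℝ) : 0 < tail2 μ x := by
  have := tail_pos hub x
  have := tail_le_one (μ := μ) x
  nlinarith [two_mul_tail_sub_sq_le_tail2 hnn x]

lemma tail_mul_two_sub_add_le_tail2 {x y : ℝ} (hyx : y ≤ x) :
    tail μ x * (2 - tail μ y) + (tail μ y - tail μ x) * tail μ (x - y) ≤ tail2 μ x := by
  set A : Set (ℝ × ℝ) := Ioi x ×ˢ univ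
  set B : Set (ℝ × ℝ) := Iic y ×ˢ Ioi x
  set C : Set (ℝ × ℝ) := Ioc y x ×ˢ Ioi (x - y)
  have hAB : Disjoint A B := disjoint_left.2 fun p hA hB => by
    simp only [A, B, mem_prod, mem_Ioi, mem_Iic] at hA hB; linarith
  have hABC : Disjoint (A ∪ B) C := disjoint_left.2 fun p hAB hC => by
    simp only [A, B, C, mem_union, mem_prod, mem_Ioi, mem_Iic, mem_Ioc] at hAB hC
    rcases hAB with h | h <;> linarith
  have hsub : (A ∪ B ∪ C : Set (ℝ × ℝ)) ≤ᵐ[μ.prod μ] {p | x < p.1 + p.2} := by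
    filter_upwards [ae_nonneg_prod hnn] with p ⟨h1, h2⟩ hp
    change p ∈ A ∪ B ∪ C at hp
    change x < p.1 + p.2
    simp only [A, B, C, mem_union, mem_prod, mem_Ioi, mem_Iic, mem_Ioc, mem_univ] at hp
    rcases hp with (h | h) | h <;> linarith
  calc tail μ x * (2 - tail μ y) + (tail μ y - tail μ x) * tail μ (x - y)
      = (μ.prod μ).real A + (μ.prod μ).real B + (μ.prod μ).real C := by
        simp only [A, B, C, measureReal_prod_prod, probReal_univ, measureReal_Iic_eq_one_sub_tail,
          ← Ioi_sdiff_Ioi, measureReal_Ioi_eq_tail,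
          measureReal_sdiff (Ioi_subset_Ioi hyx) measurableSet_Ioi (measure_ne_top μ _)]
        ring
    _ = (μ.prod μ).real (A ∪ B ∪ C) := by
        rw [measureReal_union hABC (measurableSet_Ioc.prod measurableSet_Ioi),
          measureReal_union hAB (measurableSet_Iic.prod measurableSet_Ioi)]
    _ ≤ tail2 μ x := ENNReal.toReal_mono (measure_ne_top _ _) (measure_mono_ae hsub)

variable (hub : ∀ x : ℝ, 0 < μ (Ioi x))
include hub

lemma Subexponential.tendsto_tail_sub_div (hS : Subexponential μ) {y : ℝ} (hy : 0 ≤ y) :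
    Tendsto (fun x => tail μ (x - y) / tail μ x) atTop (𝓝 1) := by
  have hty := tail_pos hub y
  have hu : Tendsto (fun x => (tail2 μ x / tail μ x - 2 + tail μ y) / (tail μ y - tail μ x))
      atTop (𝓝 1) := by
    have := ((hS.sub_const 2).add_const (tail μ y)).div
      (tendsto_const_nhds.sub (tendsto_tail_atTop μ)) (sub_zero (tail μ y) ▸ hty.ne')
    rwa [sub_self, zero_add, sub_zero, div_self hty.ne'] at this
  refine tendsto_of_tendsto_of_tendsto_of_le_of_le' tendsto_const_nhds hu
    (Eventually.of_forall fun x => (one_le_div (tail_pos hub x)).2 (tail_antitone (by linarith)))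
    ?_
  filter_upwards [(tendsto_tail_atTop μ).eventually (gt_mem_nhds hty), eventually_ge_atTop y]
    with x hlt hyx
  have htx := tail_pos hub x
  rw [le_div_iff₀ (sub_pos.2 hlt)]
  calc tail μ (x - y) / tail μ x * (tail μ y - tail μ x)
      = (tail μ y - tail μ x) * tail μ (x - y) / tail μ x := by ring
    _ ≤ (tail2 μ x - tail μ x * (2 - tail μ y)) / tail μ x :=
        div_le_div_of_nonneg_right (by linarith [tail_mul_two_sub_add_le_tail2 hnn hyx]) htx.le
    _ = tail2 μ x / tail μ x - 2 + tail μ y := by field_simp; ring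

lemma Subexponential.longTailed (hS : Subexponential μ) : LongTailed μ :=
  longTailed_of_tendsto_tail_sub_div fun _ hy => hS.tendsto_tail_sub_div hnn hub hy

lemma Subexponential.tendsto_condPair (hS : Subexponential μ) {K : ℝ} (hK : 0 ≤ K) :
    Tendsto (fun x => condPair μ {p | x - K < max p.1 p.2} x) atTop (𝓝 1) := by
  have hl : Tendsto (fun x => (2 - tail μ x) * (tail μ x / tail2 μ x)) atTop (𝓝 1) := by
    simpa [inv_div] using ((tendsto_tail_atTop μ).const_sub 2).mul (hS.inv₀ two_ne_zero)
  refine tendsto_of_tendsto_of_tendsto_of_le_of_le hl tendsto_const_nhds (fun x => ?_)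
    (fun x => condPair_le_one _ x)
  calc (2 - tail μ x) * (tail μ x / tail2 μ x) = (2 * tail μ x - tail μ x ^ 2) / tail2 μ x := by
        ring
    _ ≤ condPair μ {p | x - K < max p.1 p.2} x :=
        div_le_div_of_nonneg_right
          (two_mul_tail_sub_sq_le_measureReal_inter hnn (by linarith)) (tail2_pos hnn hub x).le

lemma Subexponential.memJ (hS : Subexponential μ) : MemJ μ :=
  tendsto_const_nhds.congr' <| (eventually_ge_atTop 0).mono fun _ hK =>
    ((hS.tendsto_condPair hnn hub hK).liminf_eq).symm

lemma MemJ.subexponential (hJ : MemJ μ) (hL : LongTailed μ) : Subexponential μ := by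
  refine tendsto_order.2 ⟨fun a ha => ?_, fun a ha => ?_⟩
  · have h2 : Tendsto (fun x => 2 - tail μ x) atTop (𝓝 2) := by
      simpa using (tendsto_tail_atTop μ).const_sub 2
    filter_upwards [h2.eventually (lt_mem_nhds ha)] with x hx
    refine hx.trans_le ((le_div_iff₀ (tail_pos hub x)).2 ?_)
    linarith [two_mul_tail_sub_sq_le_tail2 hnn x]
  · obtain ⟨c, hac, hc1⟩ := exists_between ((div_lt_one (by linarith)).2 ha : 2 / a < 1)
    have hc : 0 < c := (div_pos two_pos (by linarith)).trans hac
    have h2ac : 2 < a * c := by rwa [div_lt_iff₀' (by linarith)] at hac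
    obtain ⟨K, hK⟩ := (hJ.eventually (lt_mem_nhds hc1)).exists
    have hcond := eventually_lt_of_lt_liminf hK
      (isBoundedUnder_of_eventually_ge (Eventually.of_forall fun x => condPair_nonneg _ x))
    have hLK : Tendsto (fun x => tail μ (x - K) / tail μ x) atTop (𝓝 1) := by
      simpa [← sub_eq_add_neg] using hL (-K)
    filter_upwards [hcond, (hLK.const_mul 2).eventually (gt_mem_nhds (by linarith : 2 * 1 < a * c))]
      with x hcx hrx
    have htx := tail_pos hub x
    have ht2 := tail2_pos hnn hub x
    have hupper : c * tail2 μ x < a * c * tail μ x :=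
      calc c * tail2 μ x < condPair μ {p | x - K < max p.1 p.2} x * tail2 μ x :=
            mul_lt_mul_of_pos_right hcx ht2
        _ ≤ 2 * tail μ (x - K) := by
            rw [condPair_mul_tail2 ht2.ne']
            exact measureReal_inter_le_two_mul_tail x (x - K)
        _ < a * c * tail μ x := by rwa [mul_div_assoc', div_lt_iff₀ htx] at hrx
    rw [div_lt_iff₀ htx]
    nlinarith

end Probability

theorem stmt6 (μ : Measure ℝ) [IsProbabilityMeasure μ]
    (hnn : μ (Set.Iio 0) = 0) (hub : ∀ x : ℝ, 0 < μ (Set.Ioi x)) :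
    (MemJ μ ∧ LongTailed μ) ↔ Subexponential μ :=
  ⟨fun ⟨hJ, hL⟩ => hJ.subexponential hnn hub hL,
    fun hS => ⟨hS.memJ hnn hub, hS.longTailed hnn hub⟩⟩
end
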